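/- arXiv:1108.3598 — 3 statements merged into one kernel-verified Lean document; each statement's English description precedes it below -/
import Mathlib

section
/- Let E be a real normed vector space, let f : E → ℝ be twice continuously differentiable near a point x with f(x) < 0, let 0 < δ ≤ 1, and set g := fun y ↦ −(−f(y))^δ. Assume the second Fréchet derivative D²g(x) is positive semidefinite, i.e., D²g(x)(w, w) ≥ 0 for all w ∈ E. Then for every u ∈ E with Df(x)u = 0 and every w ∈ E: δ·(−f(x))^{δ−1}·|D²f(x)(u, w)| ≤ (D²g(x)(u, u))^{1/2} · (D²g(x)(w, w))^{1/2}. (This is the functional form of estimate (3.4): the Levi form of r_δ applied to a tangential vector u is controlled, with a gain, by the Levi form of −(−r_δ)^δ.) -/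
/-!
With `φ t = -(-t) ^ δ`, the second-order chain rule gives
`D²g(x)(v, w) = φ'(f x) D²f(x)(v, w) + φ''(f x) Df(x)v Df(x)w`, so for `u` in the kernel of
`Df(x)` the second term drops out and `D²g(x)(u, w) = δ (-f x)^(δ-1) D²f(x)(u, w)`.
As `g` is `C²` near `x`, `D²g(x)` is symmetric, hence a positive semidefinite bilinear form,
and the estimate is its Cauchy–Schwarz inequality.
-/

open Topology

namespace LinearMap.BilinForm

section OrderedField

variable {R M : Type*} [Field R] [LinearOrder R] [IsStrictOrderedRing R]
  [AddCommGroup M] [Module R M] {B : LinearMap.BilinForm R M}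

theorem IsPosSemidef.sq_apply_le (hB : B.IsPosSemidef) (u w : M) :
    B u w ^ 2 ≤ B u u * B w w := by
  have hquad : ∀ t : R, 0 ≤ B w w * (t * t) + 2 * B u w * t + B u u := fun t => by
    have := hB.isNonneg.nonneg (u + t • w)
    simp only [map_add, map_smul, LinearMap.add_apply, LinearMap.smul_apply, smul_eq_mul,
      hB.isSymm.eq w u] at this
    linarith
  have := discrim_le_zero hquad
  rw [discrim] at this
  nlinarith

end OrderedField

theorem IsPosSemidef.abs_apply_le_sqrt_mul_sqrt {M : Type*} [AddCommGroup M] [Module ℝ M]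
    {B : LinearMap.BilinForm ℝ M} (hB : B.IsPosSemidef) (u w : M) :
    |B u w| ≤ √(B u u) * √(B w w) := by
  rw [← Real.sqrt_sq_eq_abs, ← Real.sqrt_mul (hB.isNonneg.nonneg u)]
  exact Real.sqrt_le_sqrt (hB.sq_apply_le u w)

end LinearMap.BilinForm

section SecondDerivative

variable {E : Type*} [NormedAddCommGroup E] [NormedSpace ℝ E] {f : E → ℝ} {x : E}

theorem fderiv_fderiv_comp_apply {φ φ' : ℝ → ℝ} (hf : ContDiffAt ℝ 2 f x)
    (hφ : ∀ᶠ t in 𝓝 (f x), HasDerivAt φ (φ' t) t) (hφ' : DifferentiableAt ℝ φ' (f x))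
    (v w : E) :
    fderiv ℝ (fderiv ℝ (φ ∘ f)) x v w =
      φ' (f x) * fderiv ℝ (fderiv ℝ f) x v w + deriv φ' (f x) * fderiv ℝ f x v * fderiv ℝ f x w := by
  have hdiff : ∀ᶠ y in 𝓝 x, DifferentiableAt ℝ f y :=
    (hf.eventually (by simp)).mono fun y hy => hy.differentiableAt (by simp)
  have hDcomp : fderiv ℝ (φ ∘ f) =ᶠ[𝓝 x] fun y => φ' (f y) • fderiv ℝ f y := by
    filter_upwards [hdiff, hf.continuousAt.eventually hφ] with y hfy hφy
    exact (hφy.comp_hasFDerivAt y hfy.hasFDerivAt).fderiv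
  have hD2f : HasFDerivAt (fderiv ℝ f) (fderiv ℝ (fderiv ℝ f) x) x :=
    ((hf.fderiv_right (m := 1) (by norm_num)).differentiableAt (by simp)).hasFDerivAt
  have hcoef := hφ'.hasDerivAt.comp_hasFDerivAt x (hf.differentiableAt (by simp)).hasFDerivAt
  have hD2comp : HasFDerivAt (fun y => φ' (f y) • fderiv ℝ f y) _ x := hcoef.smul hD2f
  rw [hDcomp.fderiv_eq, hD2comp.fderiv]
  simp only [add_apply, smul_apply, ContinuousLinearMap.smulRight_apply, Function.comp_apply,
    smul_eq_mul]

theorem fderiv_fderiv_comp_apply_of_fderiv_eq_zero {φ φ' : ℝ → ℝ} (hf : ContDiffAt ℝ 2 f x)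
    (hφ : ∀ᶠ t in 𝓝 (f x), HasDerivAt φ (φ' t) t) (hφ' : DifferentiableAt ℝ φ' (f x))
    {u : E} (hu : fderiv ℝ f x u = 0) (w : E) :
    fderiv ℝ (fderiv ℝ (φ ∘ f)) x u w = φ' (f x) * fderiv ℝ (fderiv ℝ f) x u w := by
  rw [fderiv_fderiv_comp_apply hf hφ hφ', hu]
  ring

end SecondDerivative

theorem hasDerivAt_neg_rpow_neg {δ t : ℝ} (ht : t < 0) :
    HasDerivAt (fun s : ℝ => -(-s) ^ δ) (δ * (-t) ^ (δ - 1)) t := by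
  have := ((Real.hasDerivAt_rpow_const (p := δ) (Or.inl (neg_ne_zero.2 ht.ne))).comp t
    (hasDerivAt_neg t)).neg
  simpa [Function.comp_def, Pi.neg_def] using this

theorem stmt_3_general {E : Type*} [NormedAddCommGroup E] [NormedSpace ℝ E]
    (f : E → ℝ) (x : E) (hf : ContDiffAt ℝ 2 f x) (hx : f x < 0)
    (δ : ℝ) (hδ0 : 0 < δ)
    (g : E → ℝ) (hg : g = fun y => -(-f y) ^ δ)
    (hpsd : ∀ w : E, 0 ≤ iteratedFDeriv ℝ 2 g x ![w, w]) :
    ∀ u : E, fderiv ℝ f x u = 0 →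
      ∀ w : E,
        δ * (-f x) ^ (δ - 1) * |iteratedFDeriv ℝ 2 f x ![u, w]| ≤
          Real.sqrt (iteratedFDeriv ℝ 2 g x ![u, u]) *
            Real.sqrt (iteratedFDeriv ℝ 2 g x ![w, w]) := by
  intro u hu w
  simp only [iteratedFDeriv_two_apply, Matrix.cons_val_zero, Matrix.cons_val_one] at hpsd ⊢
  have hg2 : ContDiffAt ℝ 2 g x := hg ▸ (hf.neg.rpow_const_of_ne (by linarith)).neg
  have hB : LinearMap.BilinForm.IsPosSemidef (fderiv ℝ (fderiv ℝ g) x).toLinearMap₁₂ :=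
    ⟨⟨hg2.isSymmSndFDerivAt (by simp)⟩, ⟨hpsd⟩⟩
  have hφ : ∀ᶠ t in 𝓝 (f x), HasDerivAt (fun s : ℝ => -(-s) ^ δ) (δ * (-t) ^ (δ - 1)) t :=
    (eventually_lt_nhds hx).mono fun t ht => hasDerivAt_neg_rpow_neg ht
  have hφ' : DifferentiableAt ℝ (fun t : ℝ => δ * (-t) ^ (δ - 1)) (f x) := by
    fun_prop (disch := linarith)
  have htan := fderiv_fderiv_comp_apply_of_fderiv_eq_zero hf hφ hφ' hu w
  rw [show (fun s : ℝ => -(-s) ^ δ) ∘ f = g from hg ▸ rfl] at htan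
  have hc : 0 < δ * (-f x) ^ (δ - 1) := mul_pos hδ0 (Real.rpow_pos_of_pos (neg_pos.2 hx) _)
  calc δ * (-f x) ^ (δ - 1) * |fderiv ℝ (fderiv ℝ f) x u w|
      = |fderiv ℝ (fderiv ℝ g) x u w| := by
        rw [htan, abs_mul, abs_of_pos hc]
    _ ≤ _ := hB.abs_apply_le_sqrt_mul_sqrt u w

/-- Functional form of estimate (3.4): let `f : E → ℝ` be `C²`
near `x` with `f x < 0`, `0 < δ ≤ 1`, `g := fun y ↦ -(-f y) ^ δ`, and assume the
second Fréchet derivative of `g` at `x` is positive semidefinite. Then for every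
`u` with `Df(x)u = 0` and every `w`,
`δ (-f x)^(δ-1) |D²f(x)(u,w)| ≤ (D²g(x)(u,u))^{1/2} (D²g(x)(w,w))^{1/2}`. -/
theorem stmt_3 {E : Type*} [NormedAddCommGroup E] [NormedSpace ℝ E]
    (f : E → ℝ) (x : E) (hf : ContDiffAt ℝ 2 f x) (hx : f x < 0)
    (δ : ℝ) (hδ0 : 0 < δ) (hδ1 : δ ≤ 1)
    (g : E → ℝ) (hg : g = fun y => -(-f y) ^ δ)
    (hpsd : ∀ w : E, 0 ≤ iteratedFDeriv ℝ 2 g x ![w, w]) :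
    ∀ u : E, fderiv ℝ f x u = 0 →
      ∀ w : E,
        δ * (-f x) ^ (δ - 1) * |iteratedFDeriv ℝ 2 f x ![u, w]| ≤
          Real.sqrt (iteratedFDeriv ℝ 2 g x ![u, u]) *
            Real.sqrt (iteratedFDeriv ℝ 2 g x ![w, w]) :=
  stmt_3_general f x hf hx δ hδ0 g hg hpsd
end

section
/- Let n ≥ 1, let H be an n×n complex Hermitian matrix, let v ∈ ℂⁿ with ‖v‖ = 1, let ρ > 0, 0 < δ ≤ 1, and let K ≥ 0 with ⟨Hv, v⟩ ≤ K. Define P := δ·ρ^{δ−1}·H + δ·(1−δ)·ρ^{δ−2}·(v vᴴ) and assume P is positive semidefinite. Then for every u ∈ ℂⁿ with ⟨u, v⟩ = 0 one has |⟨Hu, v⟩| ≤ δ^{−1/2}·ρ^{−δ/2}·(K·ρ + (1−δ))^{1/2} · ⟨Pu, u⟩^{1/2}. (This is estimate (3.4) with the explicit constant: the Levi form of r_δ against the normal direction is bounded by (1−δ)^{1/2}(−r_δ)^{−δ/2} times the square root of the Levi form of −(−r_δ)^δ, up to a term O((−r_δ)^{(1−δ)/2}).) -/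
/-!
Since `P` is positive semidefinite, Cauchy–Schwarz for the form `⟨P ·, ·⟩` gives
`|⟨Pu, v⟩|² ≤ ⟨Pu, u⟩ ⟨Pv, v⟩`. For `u ⊥ v` the rank-one part of `P` does not see `u`,
so `⟨Pu, v⟩ = δ ρ^(δ-1) ⟨Hu, v⟩`, while `⟨Pv, v⟩ ≤ δ ρ^(δ-2) (Kρ + 1 - δ)` because
`‖v‖ = 1`. Dividing by `δ ρ^(δ-1)` yields the constant.
-/

/-- The Hermitian pairing `⟨A u, v⟩` on `ℂⁿ = EuclideanSpace ℂ (Fin n)`,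
where `A` acts by matrix-vector multiplication. -/
noncomputable def matInner {n : ℕ} (A : Matrix (Fin n) (Fin n) ℂ)
    (u v : EuclideanSpace ℂ (Fin n)) : ℂ :=
  inner ℂ ((WithLp.equiv 2 (Fin n → ℂ)).symm (A.mulVec ((WithLp.equiv 2 (Fin n → ℂ)) u))) v

/-- The rank-one outer product matrix `v vᴴ`, with entries `v i * conj (v j)`. -/
noncomputable def outer {n : ℕ} (v : EuclideanSpace ℂ (Fin n)) :
    Matrix (Fin n) (Fin n) ℂ :=
  Matrix.vecMulVec ((WithLp.equiv 2 (Fin n → ℂ)) v) (star ((WithLp.equiv 2 (Fin n → ℂ)) v))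

open RCLike in
theorem LinearMap.IsPositive.norm_inner_sq_le {𝕜 E : Type*} [RCLike 𝕜] [NormedAddCommGroup E]
    [InnerProductSpace 𝕜 E] {T : E →ₗ[𝕜] E} (hT : T.IsPositive) (x y : E) :
    ‖inner 𝕜 (T x) y‖ ^ 2 ≤ re (inner 𝕜 (T x) x) * re (inner 𝕜 (T y) y) := by
  -- `(x, y) ↦ ⟪T x, y⟫` is a semi-inner product, for which Cauchy–Schwarz holds.
  let c : PreInnerProductSpace.Core 𝕜 E :=
    { inner := fun x y => inner 𝕜 (T x) y
      conj_inner_symm := fun x y => by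
        simp only [inner_conj_symm, hT.isSymmetric x y]
      re_inner_nonneg := hT.re_inner_nonneg_left
      add_left := fun x y z => by simp only [map_add, inner_add_left]
      smul_left := fun x y r => by simp only [map_smul, inner_smul_left] }
  have hcs := InnerProductSpace.Core.inner_mul_inner_self_le (c := c) x y
  have hsymm : ‖inner 𝕜 (T y) x‖ = ‖inner 𝕜 (T x) y‖ := by
    rw [hT.isSymmetric y x, norm_inner_symm]
  rw [sq]
  nth_rewrite 2 [← hsymm]
  exact hcs

section matInner

open Matrix

variable {n : ℕ}

theorem matInner_eq_inner_toEuclideanLin (A : Matrix (Fin n) (Fin n) ℂ)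
    (u v : EuclideanSpace ℂ (Fin n)) : matInner A u v = inner ℂ (A.toEuclideanLin u) v :=
  rfl

@[simp]
theorem matInner_add (A B : Matrix (Fin n) (Fin n) ℂ) (u v : EuclideanSpace ℂ (Fin n)) :
    matInner (A + B) u v = matInner A u v + matInner B u v := by
  simp only [matInner_eq_inner_toEuclideanLin, map_add, LinearMap.add_apply, inner_add_left]

@[simp]
theorem matInner_ofReal_smul (c : ℝ) (A : Matrix (Fin n) (Fin n) ℂ)
    (u v : EuclideanSpace ℂ (Fin n)) : matInner ((c : ℂ) • A) u v = c * matInner A u v := by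
  simp only [matInner_eq_inner_toEuclideanLin, map_smul, LinearMap.smul_apply,
    inner_smul_left, Complex.conj_ofReal]

theorem matInner_outer (v u w : EuclideanSpace ℂ (Fin n)) :
    matInner (outer v) u w = inner ℂ u v * inner ℂ v w := by
  rw [matInner, outer, vecMulVec_mulVec, op_smul_eq_smul]
  simp only [WithLp.equiv_apply, WithLp.equiv_symm_apply, WithLp.toLp_smul, WithLp.toLp_ofLp,
    inner_smul_left]
  congr 1
  simp [EuclideanSpace.inner_eq_star_dotProduct, dotProduct, mul_comm]

theorem isHermitian_outer (v : EuclideanSpace ℂ (Fin n)) : (outer v).IsHermitian := by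
  ext i j
  simp [outer, vecMulVec, conjTranspose_apply, mul_comm]

theorem norm_matInner_sq_le {A : Matrix (Fin n) (Fin n) ℂ} (hA : A.IsHermitian)
    (hA_nonneg : ∀ u, 0 ≤ (matInner A u u).re) (u v : EuclideanSpace ℂ (Fin n)) :
    ‖matInner A u v‖ ^ 2 ≤ (matInner A u u).re * (matInner A v v).re :=
  LinearMap.IsPositive.norm_inner_sq_le ⟨isSymmetric_toEuclideanLin_iff.2 hA, hA_nonneg⟩ u v

end matInner

theorem sq_mul_rpow_neg_half_mul_rpow {δ ρ : ℝ} (hδ : 0 < δ) (hρ : 0 < ρ) :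
    (δ * ρ ^ (δ - 1) * (δ ^ (-(1 : ℝ) / 2) * ρ ^ (-δ / 2))) ^ 2 = δ * ρ ^ (δ - 2) := by
  have hδ_sq : (δ ^ (-(1 : ℝ) / 2)) ^ 2 = δ⁻¹ := by
    rw [← Real.rpow_mul_natCast hδ.le]; norm_num [Real.rpow_neg_one]
  have hρ_sq : (ρ ^ (δ - 1)) ^ 2 * (ρ ^ (-δ / 2)) ^ 2 = ρ ^ (δ - 2) := by
    rw [← Real.rpow_mul_natCast hρ.le, ← Real.rpow_mul_natCast hρ.le, ← Real.rpow_add hρ]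
    ring_nf
  calc _ = δ ^ 2 * (δ ^ (-(1 : ℝ) / 2)) ^ 2 * ((ρ ^ (δ - 1)) ^ 2 * (ρ ^ (-δ / 2)) ^ 2) := by
        ring
    _ = δ * ρ ^ (δ - 2) := by rw [hδ_sq, hρ_sq]; field_simp

theorem le_mul_sqrt_of_sq_le {a c s p : ℝ} (hc : 0 < c) (hs : 0 ≤ s)
    (h : (c * a) ^ 2 ≤ p * (c * s) ^ 2) : a ≤ s * √p := by
  have : c * a ≤ c * (s * √p) := calc
    c * a ≤ √(p * (c * s) ^ 2) := Real.le_sqrt_of_sq_le h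
    _ = c * (s * √p) := by rw [Real.sqrt_mul' _ (sq_nonneg _), Real.sqrt_sq (by positivity)]; ring
  exact le_of_mul_le_mul_left this hc

theorem stmt_5_general (n : ℕ) (H : Matrix (Fin n) (Fin n) ℂ)
    (hH : H.IsHermitian) (v : EuclideanSpace ℂ (Fin n)) (hv : ‖v‖ = 1)
    (ρ : ℝ) (hρ : 0 < ρ) (δ : ℝ) (hδ0 : 0 < δ)
    (K : ℝ) (hHv : (matInner H v v).re ≤ K)
    (P : Matrix (Fin n) (Fin n) ℂ)
    (hP : P = ((δ * ρ ^ (δ - 1) : ℝ) : ℂ) • H +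
      ((δ * (1 - δ) * ρ ^ (δ - 2) : ℝ) : ℂ) • outer v)
    (hpsd : ∀ u : EuclideanSpace ℂ (Fin n), 0 ≤ (matInner P u u).re) :
    ∀ u : EuclideanSpace ℂ (Fin n), inner ℂ u v = (0 : ℂ) →
      ‖matInner H u v‖ ≤
        δ ^ (-(1 : ℝ) / 2) * ρ ^ (-δ / 2) * Real.sqrt (K * ρ + (1 - δ)) *
          Real.sqrt ((matInner P u u).re) := by
  intro u hu
  set c := δ * ρ ^ (δ - 1)
  set M := K * ρ + (1 - δ)
  have hc : 0 < c := by positivity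
  have hP_herm : P.IsHermitian := by
    rw [hP]
    exact (hH.smul (Complex.conj_ofReal _)).add
      ((isHermitian_outer v).smul (Complex.conj_ofReal _))
  have hPuv : matInner P u v = c * matInner H u v := by
    simp only [hP, matInner_add, matInner_ofReal_smul, matInner_outer, hu, zero_mul, mul_zero,
      add_zero]
  have hPvv : (matInner P v v).re ≤ δ * ρ ^ (δ - 2) * M := by
    have hρ_pow : ρ ^ (δ - 1) = ρ ^ (δ - 2) * ρ := by
      rw [← Real.rpow_add_one hρ.ne']; ring_nf
    have hvv : matInner (outer v) v v = 1 := by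
      rw [matInner_outer, inner_self_eq_norm_sq_to_K, hv]; norm_num
    simp only [hP, matInner_add, matInner_ofReal_smul, hvv, mul_one, Complex.add_re,
      Complex.re_ofReal_mul, Complex.ofReal_re]
    calc _ ≤ c * K + δ * (1 - δ) * ρ ^ (δ - 2) := by gcongr
      _ = _ := by simp only [c, M, hρ_pow]; ring
  have hM : 0 ≤ M := nonneg_of_mul_nonneg_right ((hpsd v).trans hPvv) (by positivity)
  have hcs : (c * (δ ^ (-(1 : ℝ) / 2) * ρ ^ (-δ / 2) * √M)) ^ 2 = δ * ρ ^ (δ - 2) * M := by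
    rw [← mul_assoc, mul_pow, Real.sq_sqrt hM, sq_mul_rpow_neg_half_mul_rpow hδ0 hρ]
  refine le_mul_sqrt_of_sq_le hc (by positivity) ?_
  calc (c * ‖matInner H u v‖) ^ 2 = ‖matInner P u v‖ ^ 2 := by
        rw [hPuv, norm_mul, Complex.norm_real, Real.norm_of_nonneg hc.le]
    _ ≤ (matInner P u u).re * (matInner P v v).re := norm_matInner_sq_le hP_herm hpsd u v
    _ ≤ _ := by rw [hcs]; gcongr; exact hpsd u

/-- Estimate (3.4) with explicit constant: let `H` be Hermitian,
`‖v‖ = 1`, `ρ > 0`, `0 < δ ≤ 1`, `K ≥ 0` with `⟨Hv, v⟩ ≤ K`, and set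
`P := δ ρ^(δ-1) • H + δ(1-δ) ρ^(δ-2) • (v vᴴ)`. If `P` is positive semidefinite,
then for every `u` with `⟨u, v⟩ = 0`,
`|⟨Hu, v⟩| ≤ δ^{-1/2} ρ^{-δ/2} (Kρ + (1-δ))^{1/2} ⟨Pu,u⟩^{1/2}`. -/
theorem stmt_5 (n : ℕ) (hn : 1 ≤ n) (H : Matrix (Fin n) (Fin n) ℂ)
    (hH : H.IsHermitian) (v : EuclideanSpace ℂ (Fin n)) (hv : ‖v‖ = 1)
    (ρ : ℝ) (hρ : 0 < ρ) (δ : ℝ) (hδ0 : 0 < δ) (hδ1 : δ ≤ 1)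
    (K : ℝ) (hK : 0 ≤ K) (hHv : (matInner H v v).re ≤ K)
    (P : Matrix (Fin n) (Fin n) ℂ)
    (hP : P = ((δ * ρ ^ (δ - 1) : ℝ) : ℂ) • H +
      ((δ * (1 - δ) * ρ ^ (δ - 2) : ℝ) : ℂ) • outer v)
    (hpsd : ∀ u : EuclideanSpace ℂ (Fin n), 0 ≤ (matInner P u u).re) :
    ∀ u : EuclideanSpace ℂ (Fin n), inner ℂ u v = (0 : ℂ) →
      ‖matInner H u v‖ ≤
        δ ^ (-(1 : ℝ) / 2) * ρ ^ (-δ / 2) * Real.sqrt (K * ρ + (1 - δ)) *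
          Real.sqrt ((matInner P u u).re) :=
  stmt_5_general n H hH v hv ρ hρ δ hδ0 K hHv P hP hpsd
end

section
/- Let E be a real normed vector space, let f : E → ℝ be twice continuously differentiable near a point x, let ρ > 0 with f(x) + ρ < 0, and let 0 < δ ≤ 1. If the second Fréchet derivative of y ↦ −(−f(y))^δ at x is positive semidefinite, then the second Fréchet derivative of y ↦ −(−f(y)−ρ)^δ at x is also positive semidefinite. (Functional form of the exhaustion step in the proof of Theorem 3.1: if −(−r_δ)^δ is plurisubharmonic at a point of the subdomain D_ρ = {r_δ + ρ < 0}, then so is −(−r_δ−ρ)^δ.) -/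
/-!
Writing `u = -f - c > 0`, the Hessian of `-u ^ δ` is `δ u ^ (δ - 1) (D²f + (1 - δ) (Df)² / u)`.
The prefactor is positive, so only the sign of the bracket matters, and since `1 - δ ≥ 0` the
bracket can only grow when `u` decreases from `-f x` to `-f x - ρ`.
-/

open Filter Topology

theorem HasFDerivAt.neg_rpow_neg_sub {E : Type*} [NormedAddCommGroup E] [NormedSpace ℝ E]
    {f : E → ℝ} {f' : E →L[ℝ] ℝ} {y : E} (hf : HasFDerivAt f f' y) {c : ℝ} (hy : f y + c < 0)
    (δ : ℝ) :
    HasFDerivAt (fun z => -(-f z - c) ^ δ) ((δ * (-f y - c) ^ (δ - 1)) • f') y := by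
  have hu : HasFDerivAt (fun z => -f z - c) (-f') y := hf.neg.sub_const c
  have h := (hu.rpow_const (p := δ) (Or.inl (by linarith))).neg
  rw [smul_neg, neg_neg] at h
  exact h

theorem iteratedFDeriv_two_neg_rpow_neg_sub_apply {E : Type*} [NormedAddCommGroup E]
    [NormedSpace ℝ E] {f : E → ℝ} {x : E} (hf : ContDiffAt ℝ 2 f x) {c : ℝ} (hx : f x + c < 0)
    (δ : ℝ) (w : E) :
    iteratedFDeriv ℝ 2 (fun y => -(-f y - c) ^ δ) x ![w, w] =
      δ * (-f x - c) ^ (δ - 1) *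
        (fderiv ℝ (fderiv ℝ f) x w w + (1 - δ) * fderiv ℝ f x w ^ 2 / (-f x - c)) := by
  have hfderiv : fderiv ℝ (fun y => -(-f y - c) ^ δ) =ᶠ[𝓝 x]
      fun y => (δ * (-f y - c) ^ (δ - 1)) • fderiv ℝ f y := by
    filter_upwards [hf.eventually (by simp), hf.continuousAt.eventually_lt continuousAt_const
      (show f x < -c by linarith)] with y hCy hy
    exact (((hCy.differentiableAt (by simp)).hasFDerivAt).neg_rpow_neg_sub (by linarith) δ).fderiv
  have hu : HasFDerivAt (fun y => -f y - c) (-fderiv ℝ f x) x :=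
    (hf.differentiableAt (by simp)).hasFDerivAt.neg.sub_const c
  have hcoeff := (hu.rpow_const (p := δ - 1) (Or.inl (by linarith))).const_mul δ
  have hDf := ((hf.fderiv_right (m := 1) le_rfl).differentiableAt one_ne_zero).hasFDerivAt
  have hpos : 0 < -f x - c := by linarith
  have hD2 : fderiv ℝ (fun y => (δ * (-f y - c) ^ (δ - 1)) • fderiv ℝ f y) x = _ :=
    (hcoeff.smul hDf).fderiv
  rw [iteratedFDeriv_two_apply, hfderiv.fderiv_eq, hD2]
  simp only [add_apply, smul_apply, ContinuousLinearMap.smulRight_apply, neg_apply, smul_eq_mul,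
    Matrix.cons_val_zero, Matrix.cons_val_one]
  rw [Real.rpow_sub_one hpos.ne' (δ - 1)]
  field_simp
  ring

/-- Exhaustion step of Theorem 3.1, functional form: let
`f : E → ℝ` be `C²` near `x`, `ρ > 0` with `f x + ρ < 0`, and `0 < δ ≤ 1`.
If the second Fréchet derivative of `y ↦ -(-f y) ^ δ` at `x` is positive
semidefinite, then so is the second Fréchet derivative of
`y ↦ -(-f y - ρ) ^ δ` at `x`. -/
theorem stmt_7 {E : Type*} [NormedAddCommGroup E] [NormedSpace ℝ E]
    (f : E → ℝ) (x : E) (hf : ContDiffAt ℝ 2 f x)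
    (ρ : ℝ) (hρ : 0 < ρ) (hx : f x + ρ < 0)
    (δ : ℝ) (hδ0 : 0 < δ) (hδ1 : δ ≤ 1)
    (hpsd : ∀ w : E, 0 ≤ iteratedFDeriv ℝ 2 (fun y => -(-f y) ^ δ) x ![w, w]) :
    ∀ w : E, 0 ≤ iteratedFDeriv ℝ 2 (fun y => -(-f y - ρ) ^ δ) x ![w, w] := by
  intro w
  have h := hpsd w
  have hfx : f x + 0 < 0 := by linarith
  rw [show (fun y => -(-f y) ^ δ) = fun y => -(-f y - 0) ^ δ by simp only [sub_zero]] at h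
  rw [iteratedFDeriv_two_neg_rpow_neg_sub_apply hf hfx] at h
  rw [iteratedFDeriv_two_neg_rpow_neg_sub_apply hf hx]
  set a := -f x - 0
  set b := -f x - ρ
  set H := fderiv ℝ (fderiv ℝ f) x w w
  set p := fderiv ℝ f x w ^ 2
  have hb : 0 < b := by linarith
  have hbracket : 0 ≤ H + (1 - δ) * p / a :=
    (mul_nonneg_iff_of_pos_left (mul_pos hδ0 (Real.rpow_pos_of_pos (by linarith) _))).mp h
  have hmono : (1 - δ) * p / a ≤ (1 - δ) * p / b :=
    div_le_div_of_nonneg_left (mul_nonneg (by linarith) (sq_nonneg _)) hb (by linarith)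
  exact mul_nonneg (mul_pos hδ0 (Real.rpow_pos_of_pos hb _)).le (by linarith)
end
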